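/- Let n = 2 and let V₁, V₂ be an admissible family on H = ℓ²(ℕ²; ℂ), with S := ran V₁ + ran V₂ and K₁₂ := P_S S₁* S₂ P_S − P_S S₂ P_S S₁* P_S the implementation of the cross-commutator [R₁*, R₂] of the restrictions Rᵢ = Sᵢ|_S. Then K₁₂ has rank at most one (in particular it is compact and Hilbert–Schmidt), and its operator norm — which coincides with its Hilbert–Schmidt norm since the rank is at most one — equals (1 − |⟨V₁ e₀, e₀⟩|²)^{1/2} · (1 − |⟨V₂ e₀, e₀⟩|²)^{1/2}. -/

import Mathlib

/-!
Write `pᵢ = VᵢVᵢ⋆` and `qᵢ = 1 - pᵢ`. The doubly commuting `qᵢ` are projections and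
`P_S = 1 - q₁q₂`. Since `S₁⋆` and `S₂` commute, `K₁₂ = P_S S₂ q₁q₂ S₁⋆ P_S`; moving the `qᵢ`
through the operators they commute with gives
`K₁₂ = V₂ S₁⋆ V₁ (1 - S₁S₁⋆)(1 - S₂S₂⋆) V₂⋆ S₂ V₁⋆`.
On `H²(𝔻²)` the middle factor is the projection onto the constants `e₀`, so `K₁₂` is the rank-one
operator `f ↦ ⟨f, y⟩ x` with `x = V₂S₁⋆V₁e₀`, `y = V₁S₂⋆V₂e₀`, of norm `‖x‖‖y‖`. Finally
`‖S₁⋆V₁e₀‖² = 1 - ‖(1 - S₁S₁⋆)V₁e₀‖²`, and since `V₁e₀ ∈ ker S₂⋆` the defect `1 - S₁S₁⋆` acts on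
it as the projection onto `e₀`.
-/

open ContinuousLinearMap

noncomputable section

/-- `ℓ²(ℕⁿ; ℂ)`, identified with the Hardy space `H²(𝔻ⁿ)` via Taylor coefficients. -/
abbrev HardyH (n : ℕ) : Type := lp (fun _ : Fin n → ℕ => ℂ) 2

/-- `T` is the `i`-th coordinate unilateral shift (multiplication by `zᵢ` on `H²(𝔻ⁿ)`):
`(T f) α = f (α − εᵢ)` if `αᵢ ≥ 1`, and `0` otherwise. -/
def IsShift (n : ℕ) (i : Fin n) (T : HardyH n →L[ℂ] HardyH n) : Prop :=
  ∀ (f : HardyH n) (α : Fin n → ℕ),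
    T f α = if 0 < α i then f (α - Pi.single i 1) else 0

/-- The standard basis vector at the zero multi-index (the constant function `1`). -/
def e₀ (n : ℕ) : HardyH n := lp.single 2 0 1

/-- `V` is a variable-`i` inner multiplier: an isometry commuting with every shift and
with the adjoints of the shifts in all the other variables (these are exactly the
multiplication operators by one-variable inner functions `Θ(zᵢ)`). -/
def IsInnerMult (n : ℕ) (i : Fin n) (Sh : Fin n → HardyH n →L[ℂ] HardyH n)
    (V : HardyH n →L[ℂ] HardyH n) : Prop :=
  adjoint V * V = 1 ∧ (∀ j, V * Sh j = Sh j * V) ∧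
    ∀ j, j ≠ i → V * adjoint (Sh j) = adjoint (Sh j) * V

/-- An admissible family: `Sh` are the coordinate shifts, each `V i` is a variable-`i`
inner multiplier, and the `V i` doubly commute with each other. -/
def IsAdmissible {n : ℕ} (Sh V : Fin n → HardyH n →L[ℂ] HardyH n) : Prop :=
  (∀ i, IsShift n i (Sh i)) ∧ (∀ i, IsInnerMult n i Sh (V i)) ∧
  (∀ i j, i ≠ j → V i * V j = V j * V i) ∧
  (∀ i j, i ≠ j → adjoint (V i) * V j = V j * adjoint (V i))

open InnerProductSpace

section Ring

variable {A : Type*} [Ring A] {a b p q : A}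

theorem IsIdempotentElem.one_sub_mul_mul_self (hp : IsIdempotentElem p) (h : Commute p q) :
    (1 - p * q) * p = p * (1 - q) := by
  rw [sub_mul, one_mul, mul_assoc, ← h.eq, ← mul_assoc, hp.eq, mul_sub, mul_one]

theorem mul_sub_mul_mul_eq_mul_one_sub_mul (h : Commute a b) (P : A) :
    P * a * b * P - P * b * P * a * P = P * b * (1 - P) * a * P := by
  rw [mul_assoc P a, h.eq]
  noncomm_ring

theorem IsIdempotentElem.mul_one_sub_mul_self (hq : IsIdempotentElem q) (h : Commute p q) :
    q * (1 - p * q) = (1 - p) * q := by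
  rw [mul_sub, mul_one, ← mul_assoc, ← h.eq, mul_assoc, hq.eq, sub_mul, one_mul]

end Ring

section StarRing

variable {A : Type*} [Ring A] [StarRing A] {a b s v P s₁ s₂ v₁ v₂ : A}

def defect (a : A) : A := 1 - a * star a

def DoublyCommute (a b : A) : Prop := Commute a b ∧ Commute (star a) b

theorem DoublyCommute.symm (h : DoublyCommute a b) : DoublyCommute b a :=
  ⟨h.1.symm, h.2.star_right.symm⟩

theorem DoublyCommute.star_right (h : DoublyCommute a b) : DoublyCommute a (star b) :=
  ⟨h.2.star_right, h.1.star_star⟩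

theorem DoublyCommute.commute_defect_left (h : DoublyCommute a b) : Commute (defect a) b :=
  (Commute.one_left b).sub_left (h.1.mul_left h.2)

theorem one_sub_defect (a : A) : 1 - defect a = a * star a := sub_sub_cancel 1 _

theorem isStarProjection_mul_star_self (hv : star v * v = 1) : IsStarProjection (v * star v) :=
  ⟨by rw [IsIdempotentElem, mul_assoc, ← mul_assoc (star v), hv, one_mul],
    IsSelfAdjoint.mul_star_self v⟩

theorem isStarProjection_defect (hv : star v * v = 1) : IsStarProjection (defect v) :=
  (isStarProjection_mul_star_self hv).one_sub

theorem defect_mul_self (hv : star v * v = 1) : defect v * v = 0 := by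
  rw [defect, sub_mul, one_mul, mul_assoc, hv, mul_one, sub_self]

theorem star_mul_defect (hv : star v * v = 1) : star v * defect v = 0 := by
  rw [defect, mul_sub, mul_one, ← mul_assoc, hv, one_mul, sub_self]

theorem DoublyCommute.commute_defect (hv : DoublyCommute v₁ v₂) :
    Commute (defect v₁) (defect v₂) :=
  DoublyCommute.commute_defect_left
    ⟨hv.symm.commute_defect_left.symm, hv.symm.star_right.commute_defect_left.symm⟩

-- Both sides equal the commutator `s⋆ v - v s⋆`.
theorem defect_mul_star_mul (hs : star s * s = 1) (hv : star v * v = 1) (h : Commute v s) :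
    defect v * (star s * v) = star s * v * defect s := by
  have h' : star v * star s = star s * star v := h.star_star.eq
  simp only [defect, sub_mul, mul_sub, one_mul, mul_one]
  rw [mul_assoc, ← mul_assoc (star v), h', mul_assoc, hv, mul_one, mul_assoc, ← mul_assoc v s,
    h.eq, mul_assoc, ← mul_assoc (star s), hs, one_mul]

theorem star_mul_mul_defect (hs : star s * s = 1) (hv : star v * v = 1) (h : Commute v s) :
    star v * s * defect v = defect s * (star v * s) := by
  have := congrArg star (defect_mul_star_mul hs hv h)
  simpa [defect, star_mul, mul_assoc] using this

theorem compressedCrossCommutator_eq (hs₁ : star s₁ * s₁ = 1) (hs₂ : star s₂ * s₂ = 1)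
    (hv₁ : star v₁ * v₁ = 1) (hv₂ : star v₂ * v₂ = 1) (hs : Commute (star s₁) s₂)
    (h₁ : Commute v₁ s₁) (h₂ : Commute v₂ s₂) (h₁₂ : DoublyCommute v₁ s₂)
    (h₂₁ : DoublyCommute v₂ s₁) (hv : DoublyCommute v₁ v₂)
    (hP : 1 - P = defect v₁ * defect v₂) :
    P * star s₁ * s₂ * P - P * s₂ * P * star s₁ * P
      = v₂ * star s₁ * v₁ * (defect s₁ * defect s₂) * (star v₂ * s₂ * star v₁) := by
  have hq := hv.commute_defect
  have hP' : P = 1 - defect v₁ * defect v₂ := by rw [← hP, sub_sub_cancel]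
  have hPq₁ : P * defect v₁ = defect v₁ * (v₂ * star v₂) := by
    rw [hP', (isStarProjection_defect hv₁).isIdempotentElem.one_sub_mul_mul_self hq, one_sub_defect]
  have hq₂P : defect v₂ * P = v₁ * star v₁ * defect v₂ := by
    rw [hP', (isStarProjection_defect hv₂).isIdempotentElem.mul_one_sub_mul_self hq, one_sub_defect]
  have hX : Commute (star v₂ * s₂) (star s₁ * v₁) :=
    ((h₂₁.star_right.2.mul_right hv.symm.2).mul_left
      (hs.symm.mul_right h₁₂.1.symm))
  calc P * star s₁ * s₂ * P - P * s₂ * P * star s₁ * P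
      = P * (s₂ * defect v₁) * (defect v₂ * star s₁) * P := by
        rw [mul_sub_mul_mul_eq_mul_one_sub_mul hs, hP]
        simp only [mul_assoc]
    _ = P * defect v₁ * (s₂ * star s₁) * (defect v₂ * P) := by
        rw [← h₁₂.commute_defect_left.eq, h₂₁.star_right.commute_defect_left.eq]
        simp only [mul_assoc]
    _ = defect v₁ * v₂ * (star v₂ * s₂ * (star s₁ * v₁)) * (star v₁ * defect v₂) := by
        rw [hPq₁, hq₂P]
        simp only [mul_assoc]
    _ = v₂ * defect v₁ * (star s₁ * v₁ * (star v₂ * s₂)) * (defect v₂ * star v₁) := by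
        rw [hv.commute_defect_left.eq, hX.eq, hv.symm.star_right.commute_defect_left.eq]
    _ = v₂ * (defect v₁ * (star s₁ * v₁)) * (star v₂ * s₂ * defect v₂) * star v₁ := by
        simp only [mul_assoc]
    _ = v₂ * star s₁ * v₁ * (defect s₁ * defect s₂) * (star v₂ * s₂ * star v₁) := by
        rw [defect_mul_star_mul hs₁ hv₁ h₁, star_mul_mul_defect hs₂ hv₂ h₂]
        simp only [mul_assoc]

end StarRing

section Hilbert

variable {𝕜 E : Type*} [RCLike 𝕜] [NormedAddCommGroup E] [InnerProductSpace 𝕜 E] [CompleteSpace E]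

theorem norm_apply_of_star_mul_self {v : E →L[𝕜] E} (hv : star v * v = 1) (x : E) :
    ‖v x‖ = ‖x‖ :=
  (norm_map_iff_adjoint_comp_self v).mpr hv x

theorem norm_adjoint_apply_sq_add_norm_defect_apply_sq {s : E →L[𝕜] E} (hs : star s * s = 1)
    (u : E) : ‖adjoint s u‖ ^ 2 + ‖defect s u‖ ^ 2 = ‖u‖ ^ 2 := by
  have hu : s (adjoint s u) + defect s u = u := by
    simp [defect, star_eq_adjoint]
  have horth : inner 𝕜 (s (adjoint s u)) (defect s u) = 0 := by
    rw [← adjoint_inner_right, ← star_eq_adjoint, ← mul_apply_eq_comp, star_mul_defect hs,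
      zero_apply, inner_zero_right]
  have h := norm_add_sq_eq_norm_sq_add_norm_sq_of_inner_eq_zero _ _ horth
  rw [hu, norm_apply_of_star_mul_self hs] at h
  rw [sq, sq, sq, h]

theorem range_one_sub_defect_mul_defect {v₁ v₂ : E →L[𝕜] E} (hv₁ : star v₁ * v₁ = 1)
    (hv₂ : star v₂ * v₂ = 1) (hv : DoublyCommute v₁ v₂) :
    LinearMap.range ((1 - defect v₁ * defect v₂ : E →L[𝕜] E) : E →ₗ[𝕜] E)
      = LinearMap.range (v₁ : E →ₗ[𝕜] E) ⊔ LinearMap.range (v₂ : E →ₗ[𝕜] E) := by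
  set Q := 1 - defect v₁ * defect v₂ with hQ_def
  have hQv₁ : Q * v₁ = v₁ := by
    rw [sub_mul, one_mul, hv.commute_defect.eq, mul_assoc, defect_mul_self hv₁, mul_zero, sub_zero]
  have hQv₂ : Q * v₂ = v₂ := by
    rw [sub_mul, one_mul, mul_assoc, defect_mul_self hv₂, mul_zero, sub_zero]
  have hQ_eq : Q = v₁ * (star v₁ * defect v₂) + v₂ * star v₂ := by
    rw [hQ_def, ← mul_assoc, ← one_sub_defect, ← one_sub_defect]
    noncomm_ring
  have hfix : ∀ {v : E →L[𝕜] E}, Q * v = v →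
      LinearMap.range (v : E →ₗ[𝕜] E) ≤ LinearMap.range (Q : E →ₗ[𝕜] E) := by
    rintro v hQv _ ⟨x, rfl⟩
    exact ⟨v x, by simp [← mul_apply_eq_comp, hQv]⟩
  refine le_antisymm ?_ (sup_le (hfix hQv₁) (hfix hQv₂))
  rintro _ ⟨x, rfl⟩
  rw [ContinuousLinearMap.coe_coe, hQ_eq, add_apply, mul_apply_eq_comp, mul_apply_eq_comp]
  exact Submodule.add_mem_sup ⟨_, rfl⟩ ⟨_, rfl⟩

theorem one_sub_eq_defect_mul_defect {P v₁ v₂ : E →L[𝕜] E} (hP : IsStarProjection P)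
    (hv₁ : star v₁ * v₁ = 1) (hv₂ : star v₂ * v₂ = 1) (hv : DoublyCommute v₁ v₂)
    (hr : LinearMap.range (P : E →ₗ[𝕜] E)
      = LinearMap.range (v₁ : E →ₗ[𝕜] E) ⊔ LinearMap.range (v₂ : E →ₗ[𝕜] E)) :
    1 - P = defect v₁ * defect v₂ := by
  have hQ : IsStarProjection (1 - defect v₁ * defect v₂) :=
    ((isStarProjection_defect hv₁).mul (isStarProjection_defect hv₂) hv.commute_defect).one_sub
  rw [(hP.ext_iff hQ).2 (hr.trans (range_one_sub_defect_mul_defect hv₁ hv₂ hv).symm),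
    sub_sub_cancel]

theorem mul_rankOne_mul (A B : E →L[𝕜] E) (x y : E) :
    A * rankOne 𝕜 x y * B = rankOne 𝕜 (A x) (star B y) := by
  rw [mul_def, mul_def, comp_rankOne, rankOne_comp, star_eq_adjoint]

end Hilbert

namespace InnerProductSpace

variable {𝕜 E F : Type*} [RCLike 𝕜] [NormedAddCommGroup E] [NormedSpace 𝕜 E]
  [NormedAddCommGroup F] [InnerProductSpace 𝕜 F]

theorem rank_range_rankOne_le (x : E) (y : F) :
    Module.rank 𝕜 (LinearMap.range (rankOne 𝕜 x y : F →ₗ[𝕜] E)) ≤ 1 := by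
  refine (Submodule.rank_mono (s := LinearMap.range _) (t := 𝕜 ∙ x) ?_).trans ?_
  · rintro _ ⟨z, rfl⟩
    exact Submodule.smul_mem _ _ (Submodule.mem_span_singleton_self x)
  · exact (rank_span_le _).trans_eq (Cardinal.mk_singleton _)

theorem isCompactOperator_rankOne (x : E) (y : F) : IsCompactOperator (rankOne 𝕜 x y) :=
  (isCompactOperator_of_locallyCompactSpace_rng (toSpanSingleton 𝕜 x)).comp_clm (innerSL 𝕜 y)

end InnerProductSpace

section Hardy

variable {n : ℕ} {i j : Fin n} {T U : HardyH n →L[ℂ] HardyH n}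

theorem Pi.single_one_le_iff_pos {α : Fin n → ℕ} : Pi.single i 1 ≤ α ↔ 0 < α i := by
  refine ⟨fun h ↦ Nat.lt_of_succ_le (by simpa using h i), fun h k ↦ ?_⟩
  rcases eq_or_ne k i with rfl | hk
  · simpa using Nat.succ_le_of_lt h
  · simp [hk]

theorem inner_single_one_left (f : HardyH n) (α : Fin n → ℕ) :
    inner ℂ (lp.single 2 α (1 : ℂ)) f = f α := by
  simp [lp.inner_single_left]

theorem inner_e₀_left (f : HardyH n) : inner ℂ (e₀ n) f = f 0 :=
  inner_single_one_left f 0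

theorem norm_e₀ : ‖e₀ n‖ = 1 := by
  simp [e₀, lp.norm_single]

namespace IsShift

theorem apply_single (hT : IsShift n i T) (α : Fin n → ℕ) :
    T (lp.single 2 α 1) = lp.single 2 (α + Pi.single i 1) 1 := by
  ext β
  rw [hT, lp.single_apply, lp.single_apply]
  split_ifs with hβ
  · simp only [Pi.single_apply, tsub_eq_iff_eq_add_of_le (Pi.single_one_le_iff_pos.2 hβ)]
  · have : β ≠ α + Pi.single i 1 := fun h ↦ hβ (by simp [h])
    simp [this]

theorem adjoint_apply (hT : IsShift n i T) (f : HardyH n) (α : Fin n → ℕ) :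
    adjoint T f α = f (α + Pi.single i 1) := by
  rw [← inner_single_one_left, adjoint_inner_right, hT.apply_single, inner_single_one_left]

theorem star_mul_self (hT : IsShift n i T) : star T * T = 1 := by
  ext f α
  simp [star_eq_adjoint, hT.adjoint_apply, hT _ (α + _)]

theorem commute_star (hT : IsShift n i T) (hU : IsShift n j U) (hij : i ≠ j) :
    Commute (star T) U := by
  ext f α
  simp only [star_eq_adjoint, mul_apply_eq_comp, hT.adjoint_apply, hU _ α, hU _ (α + _)]
  have hαj : (α + Pi.single i 1 : Fin n → ℕ) j = α j := by simp [hij.symm]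
  rw [hαj]
  split_ifs
  · have : α + Pi.single i 1 - Pi.single j 1 = α - Pi.single j 1 + Pi.single i 1 := by
      funext k
      simp only [Pi.add_apply, Pi.sub_apply, Pi.single_apply]
      split_ifs <;> omega
    rw [this]
  · rfl

theorem adjoint_e₀ (hT : IsShift n i T) : adjoint T (e₀ n) = 0 := by
  ext α
  have : α + Pi.single i 1 ≠ 0 := fun h ↦ by simpa using congrFun h i
  simp [hT.adjoint_apply, e₀, lp.single_apply, this]

theorem defect_apply (hT : IsShift n i T) (f : HardyH n) (α : Fin n → ℕ) :
    defect T f α = if 0 < α i then 0 else f α := by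
  have : defect T f = f - T (adjoint T f) := rfl
  rw [this, lp.coeFn_sub, Pi.sub_apply, hT _ α]
  split_ifs with h
  · rw [hT.adjoint_apply, tsub_add_cancel_of_le (Pi.single_one_le_iff_pos.2 h), sub_self]
  · rw [sub_zero]

end IsShift

theorem IsInnerMult.doublyCommute {Sh : Fin n → HardyH n →L[ℂ] HardyH n}
    {V : HardyH n →L[ℂ] HardyH n} (hV : IsInnerMult n i Sh V) (hj : j ≠ i) :
    DoublyCommute V (Sh j) :=
  ⟨hV.2.1 j, Commute.star_left (hV.2.2 j hj)⟩

theorem IsAdmissible.doublyCommute {Sh V : Fin n → HardyH n →L[ℂ] HardyH n}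
    (h : IsAdmissible Sh V) (hij : i ≠ j) : DoublyCommute (V i) (V j) :=
  ⟨h.2.2.1 i j hij, h.2.2.2 i j hij⟩

end Hardy

section Bidisc

variable {i j : Fin 2} {T U : HardyH 2 →L[ℂ] HardyH 2}

namespace IsShift

theorem defect_apply_of_adjoint_eq_zero (hT : IsShift 2 i T) (hU : IsShift 2 j U) (hij : i ≠ j)
    {f : HardyH 2} (hf : adjoint U f = 0) : defect T f = inner ℂ (e₀ 2) f • e₀ 2 := by
  ext α
  rw [hT.defect_apply, inner_e₀_left, lp.coeFn_smul, Pi.smul_apply, e₀, lp.single_apply]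
  by_cases hα : α = 0
  · simp [hα]
  have hα' : 0 < α i ∨ 0 < α j := by
    by_contra! h
    exact hα (funext fun k ↦ by rcases (by omega : k = i ∨ k = j) with rfl | rfl <;> simp <;> omega)
  simp only [Pi.single_apply, hα, if_false, smul_zero]
  split_ifs with hi
  · rfl
  · have := hU.adjoint_apply f (α - Pi.single j 1)
    rw [hf, tsub_add_cancel_of_le (Pi.single_one_le_iff_pos.2 (hα'.resolve_left hi))] at this
    exact this.symm

theorem defect_mul_defect (hT : IsShift 2 i T) (hU : IsShift 2 j U) (hij : i ≠ j) :
    defect T * defect U = rankOne ℂ (e₀ 2) (e₀ 2) := by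
  ext1 f
  have hf : adjoint U (defect U f) = 0 := by
    rw [← star_eq_adjoint, ← mul_apply_eq_comp, star_mul_defect hU.star_mul_self, zero_apply]
  rw [mul_apply_eq_comp, hT.defect_apply_of_adjoint_eq_zero hU hij hf, rankOne_apply,
    inner_e₀_left, inner_e₀_left, hU.defect_apply]
  simp

theorem norm_adjoint_apply_e₀ (hT : IsShift 2 i T) (hU : IsShift 2 j U) (hij : i ≠ j)
    {v : HardyH 2 →L[ℂ] HardyH 2} (hv : star v * v = 1) (hvU : DoublyCommute v U) :
    ‖adjoint T (v (e₀ 2))‖ = √(1 - ‖inner ℂ (e₀ 2) (v (e₀ 2))‖ ^ 2) := by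
  have hker : adjoint U (v (e₀ 2)) = 0 := by
    rw [← star_eq_adjoint, ← mul_apply_eq_comp, ← hvU.2.star_right.eq, mul_apply_eq_comp,
      star_eq_adjoint, hU.adjoint_e₀, map_zero]
  have h := norm_adjoint_apply_sq_add_norm_defect_apply_sq hT.star_mul_self (v (e₀ 2))
  rw [hT.defect_apply_of_adjoint_eq_zero hU hij hker, norm_smul, norm_e₀, mul_one,
    norm_apply_of_star_mul_self hv, norm_e₀, one_pow] at h
  rw [← h, add_sub_cancel_right, Real.sqrt_sq (norm_nonneg _)]

end IsShift

end Bidisc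

/-- For `n = 2` and an admissible family `V₁, V₂` with associated
submodule `S = ran V₁ + ran V₂` (projection `P`), the cross-commutator
`K₁₂ = P S₁* S₂ P − P S₂ P S₁* P` has rank at most one (in particular it is compact), and
its operator norm equals `(1 − |⟨V₁e₀, e₀⟩|²)^{1/2} (1 − |⟨V₂e₀, e₀⟩|²)^{1/2}`. -/
theorem cross_commutator_bidisc_rank_one_and_norm
    (Sh V : Fin 2 → HardyH 2 →L[ℂ] HardyH 2)
    (hadm : IsAdmissible Sh V)
    (P : HardyH 2 →L[ℂ] HardyH 2)
    (hPsa : IsSelfAdjoint P) (hPid : P * P = P)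
    (hPr : LinearMap.range (P : HardyH 2 →ₗ[ℂ] HardyH 2) = ∑ i, LinearMap.range (V i : HardyH 2 →ₗ[ℂ] HardyH 2)) :
    Module.rank ℂ
      ↥(LinearMap.range
        ((P * adjoint (Sh 0) * Sh 1 * P - P * Sh 1 * P * adjoint (Sh 0) * P :
          HardyH 2 →L[ℂ] HardyH 2) : HardyH 2 →ₗ[ℂ] HardyH 2)) ≤ 1 ∧
    IsCompactOperator
      ⇑(P * adjoint (Sh 0) * Sh 1 * P - P * Sh 1 * P * adjoint (Sh 0) * P) ∧
    ‖P * adjoint (Sh 0) * Sh 1 * P - P * Sh 1 * P * adjoint (Sh 0) * P‖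
      = Real.sqrt (1 - ‖(inner ℂ (e₀ 2) (V 0 (e₀ 2)) : ℂ)‖ ^ 2)
        * Real.sqrt (1 - ‖(inner ℂ (e₀ 2) (V 1 (e₀ 2)) : ℂ)‖ ^ 2) := by
  have h01 : (0 : Fin 2) ≠ 1 := zero_ne_one
  have hVV := hadm.doublyCommute h01
  obtain ⟨hS, hV, -⟩ := hadm
  have hP : 1 - P = defect (V 0) * defect (V 1) :=
    one_sub_eq_defect_mul_defect ⟨hPid, hPsa⟩ (hV 0).1 (hV 1).1 hVV
      (by rw [hPr, Fin.sum_univ_two, Submodule.add_eq_sup])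
  have hK : P * adjoint (Sh 0) * Sh 1 * P - P * Sh 1 * P * adjoint (Sh 0) * P
      = rankOne ℂ (V 1 (star (Sh 0) (V 0 (e₀ 2)))) (V 0 (star (Sh 1) (V 1 (e₀ 2)))) := by
    have := compressedCrossCommutator_eq (hS 0).star_mul_self (hS 1).star_mul_self (hV 0).1
      (hV 1).1 ((hS 0).commute_star (hS 1) h01) ((hV 0).2.1 0) ((hV 1).2.1 1)
      ((hV 0).doublyCommute h01.symm) ((hV 1).doublyCommute h01) hVV hP
    rwa [(hS 0).defect_mul_defect (hS 1) h01, mul_rankOne_mul, star_mul, star_mul, star_star,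
      star_star, mul_apply_eq_comp, mul_apply_eq_comp, mul_apply_eq_comp, mul_apply_eq_comp] at this
  rw [hK]
  refine ⟨rank_range_rankOne_le _ _, isCompactOperator_rankOne _ _, ?_⟩
  rw [norm_rankOne, norm_apply_of_star_mul_self (hV 1).1, norm_apply_of_star_mul_self (hV 0).1,
    star_eq_adjoint, star_eq_adjoint,
    (hS 0).norm_adjoint_apply_e₀ (hS 1) h01 (hV 0).1 ((hV 0).doublyCommute h01.symm),
    (hS 1).norm_adjoint_apply_e₀ (hS 0) h01.symm (hV 1).1 ((hV 1).doublyCommute h01)]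

end
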